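/- Let G be a totally disconnected locally compact group, α a continuous endomorphism of G, and U a compact open subgroup of G. Then there exists N ∈ ℕ such that U_N · α⁻¹(U) = U₊ · α⁻¹(U) (as subsets of G), and the compact open subgroup U_{-N} = ⋂_{k=0}^{N} α^{-k}(U) is tidy above for α. -/

import Mathlib

open Pointwise Subgroup Filter

variable {G : Type*}

/-- The `n`-fold iterate of an endomorphism `α : G →* G`, as a monoid homomorphism. -/
def iterHom [Group G] (α : G →* G) : ℕ → G →* G
  | 0 => MonoidHom.id G
  | n + 1 => α.comp (iterHom α n)

/-- The descending sequence `U_0 = U`, `U_{n+1} = U ⊓ α(U_n)`. -/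
def seqU [Group G] (α : G →* G) (U : Subgroup G) : ℕ → Subgroup G
  | 0 => U
  | n + 1 => U ⊓ Subgroup.map α (seqU α U n)

/-- `U₊ = ⋂ₙ Uₙ`. -/
def Uplus [Group G] (α : G →* G) (U : Subgroup G) : Subgroup G := ⨅ n, seqU α U n

/-- `U₋ = ⋂ₙ α^{-n}(U)`. -/
def Uminus [Group G] (α : G →* G) (U : Subgroup G) : Subgroup G :=
  ⨅ n, Subgroup.comap (iterHom α n) U

/-- `U₊₊ = ⋃ₙ αⁿ(U₊)` as a subset of `G`. -/
def Upp [Group G] (α : G →* G) (U : Subgroup G) : Set G :=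
  ⋃ n, iterHom α n '' (Uplus α U : Set G)

/-- `U₋₋ = ⋃ₙ α^{-n}(U₋)` as a subset of `G`. -/
def Umm [Group G] (α : G →* G) (U : Subgroup G) : Set G :=
  ⋃ n, iterHom α n ⁻¹' (Uminus α U : Set G)

/-- `U₋ₙ = ⋂_{k=0}^{n} α^{-k}(U)`. -/
def Uneg [Group G] (α : G →* G) (U : Subgroup G) (n : ℕ) : Subgroup G :=
  ⨅ k ∈ Finset.range (n + 1), Subgroup.comap (iterHom α k) U

/-- `U` is tidy above for `α` if `U = U₊U₋`. -/
def TidyAbove [Group G] (α : G →* G) (U : Subgroup G) : Prop :=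
  (U : Set G) = (Uplus α U : Set G) * (Uminus α U : Set G)

/-- `U` is tidy below for `α` if `U₋₋` is closed. -/
def TidyBelow [Group G] [TopologicalSpace G] (α : G →* G) (U : Subgroup G) : Prop :=
  IsClosed (Umm α U)

/-- `U` is tidy for `α` if it is tidy above and tidy below for `α`. -/
def Tidy [Group G] [TopologicalSpace G] (α : G →* G) (U : Subgroup G) : Prop :=
  TidyAbove α U ∧ TidyBelow α U

/-- The scale of `α`: the minimum of `[α(V) : α(V) ∩ V]` over compact open subgroups `V`. -/
noncomputable def scale [Group G] [TopologicalSpace G] (α : G →* G) : ℕ :=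
  sInf {n : ℕ | ∃ V : Subgroup G, IsCompact (V : Set G) ∧ IsOpen (V : Set G) ∧
    n = Subgroup.relIndex V (Subgroup.map α V)}

section Aux

variable [Group G] (α : G →* G) (U : Subgroup G)

lemma iterHom_apply_succ (n : ℕ) (x : G) : iterHom α (n + 1) x = α (iterHom α n x) := rfl

lemma iterHom_apply_add (m n : ℕ) (x : G) :
    iterHom α (m + n) x = iterHom α m (iterHom α n x) := by
  induction m with
  | zero => rw [Nat.zero_add]; rfl
  | succ m ih => rw [Nat.succ_add, iterHom_apply_succ, ih, iterHom_apply_succ]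

lemma iterHom_apply_succ' (n : ℕ) (x : G) : iterHom α (n + 1) x = iterHom α n (α x) :=
  iterHom_apply_add α n 1 x

lemma mem_Uneg {n : ℕ} {x : G} : x ∈ Uneg α U n ↔ ∀ k ≤ n, iterHom α k x ∈ U := by
  simp [Uneg, Subgroup.mem_iInf, Subgroup.mem_comap, Nat.lt_succ_iff]

lemma mem_Uminus {x : G} : x ∈ Uminus α U ↔ ∀ n, iterHom α n x ∈ U := by
  simp [Uminus, Subgroup.mem_iInf, Subgroup.mem_comap]

lemma mem_Uplus {x : G} : x ∈ Uplus α U ↔ ∀ n, x ∈ seqU α U n := by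
  simp [Uplus, Subgroup.mem_iInf]

lemma seqU_le : ∀ n, seqU α U n ≤ U
  | 0 => le_rfl
  | _ + 1 => inf_le_left

lemma seqU_succ_le (n : ℕ) : seqU α U (n + 1) ≤ seqU α U n := by
  induction n with
  | zero => exact seqU_le α U 1
  | succ n ih => exact inf_le_inf le_rfl (Subgroup.map_mono ih)

lemma seqU_anti {m n : ℕ} (h : m ≤ n) : seqU α U n ≤ seqU α U m := by
  induction h with
  | refl => exact le_rfl
  | step _ ih => exact (seqU_succ_le α U _).trans ih

lemma Uneg_anti {m n : ℕ} (h : m ≤ n) : Uneg α U n ≤ Uneg α U m := by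
  intro x hx
  exact (mem_Uneg α U).mpr fun k hk => (mem_Uneg α U).mp hx k (hk.trans h)

lemma Uneg_le (n : ℕ) : Uneg α U n ≤ U := fun x hx =>
  (mem_Uneg α U).mp hx 0 (Nat.zero_le n)

lemma Uminus_le_comap : Uminus α U ≤ Subgroup.comap α U := fun x hx =>
  Subgroup.mem_comap.mpr ((mem_Uminus α U).mp hx 1)

lemma map_iterHom_Uneg (n : ℕ) :
    Subgroup.map (iterHom α n) (Uneg α U n) = seqU α U n := by
  induction n with
  | zero =>
    ext x
    rw [Subgroup.mem_map]
    constructor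
    · rintro ⟨y, hy, rfl⟩
      exact (mem_Uneg α U).mp hy 0 le_rfl
    · intro hx
      exact ⟨x, (mem_Uneg α U).mpr fun k hk => by
        obtain rfl := Nat.le_zero.mp hk; exact hx, rfl⟩
  | succ n ih =>
    ext x
    rw [Subgroup.mem_map]
    show _ ↔ x ∈ U ⊓ Subgroup.map α (seqU α U n)
    rw [Subgroup.mem_inf]
    constructor
    · rintro ⟨z, hz, rfl⟩
      have hz' := (mem_Uneg α U).mp hz
      refine ⟨hz' (n + 1) le_rfl, ?_⟩
      rw [← ih, Subgroup.mem_map]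
      refine ⟨iterHom α n z, Subgroup.mem_map.mpr ⟨z, ?_, rfl⟩, (iterHom_apply_succ α n z).symm⟩
      exact (mem_Uneg α U).mpr fun k hk => hz' k (hk.trans (Nat.le_succ n))
    · rintro ⟨hxU, hmap⟩
      rw [← ih, Subgroup.mem_map] at hmap
      obtain ⟨y, hy, rfl⟩ := hmap
      obtain ⟨z, hz, rfl⟩ := Subgroup.mem_map.mp hy
      refine ⟨z, (mem_Uneg α U).mpr fun k hk => ?_, rfl⟩
      rcases hk.lt_or_eq with h | rfl
      · exact (mem_Uneg α U).mp hz k (Nat.lt_succ_iff.mp h)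
      · rw [iterHom_apply_succ]; exact hxU

end Aux

section Topo

variable [Group G] [TopologicalSpace G] [IsTopologicalGroup G]
variable (α : G →* G) (U : Subgroup G)

lemma continuous_iterHom (hα : Continuous α) (n : ℕ) : Continuous (iterHom α n) := by
  induction n with
  | zero => exact continuous_id
  | succ n ih => exact hα.comp ih

lemma isCompact_seqU [T2Space G] (hα : Continuous α) (hUc : IsCompact (U : Set G)) (n : ℕ) :
    IsCompact (seqU α U n : Set G) := by
  induction n with
  | zero => exact hUc
  | succ n ih =>
    show IsCompact ((U ⊓ Subgroup.map α (seqU α U n) : Subgroup G) : Set G)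
    rw [Subgroup.coe_inf, Subgroup.coe_map]
    exact hUc.inter_right (ih.image hα).isClosed

lemma coe_Uneg_eq (n : ℕ) :
    (Uneg α U n : Set G) = ⋂ k ∈ Finset.range (n + 1), iterHom α k ⁻¹' (U : Set G) := by
  ext x
  simp [mem_Uneg, Nat.lt_succ_iff, SetLike.mem_coe]

lemma isClosed_Uneg (hα : Continuous α) (hUcl : IsClosed (U : Set G)) (n : ℕ) :
    IsClosed (Uneg α U n : Set G) := by
  rw [coe_Uneg_eq]
  exact isClosed_biInter fun k _ => hUcl.preimage (continuous_iterHom α hα k)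

lemma isClosed_Uminus (hα : Continuous α) (hUcl : IsClosed (U : Set G)) :
    IsClosed (Uminus α U : Set G) := by
  have : (Uminus α U : Set G) = ⋂ n, iterHom α n ⁻¹' (U : Set G) := by
    ext x; simp [mem_Uminus, SetLike.mem_coe]
  rw [this]
  exact isClosed_iInter fun n => hUcl.preimage (continuous_iterHom α hα n)

end Topo

/-- There is `N` with `U_N · α⁻¹(U) = U₊ · α⁻¹(U)`, and `U₋ₙ = ⋂_{k=0}^{N} α^{-k}(U)`
is tidy above for `α`. -/
theorem exists_tidyAbove [Group G] [TopologicalSpace G] [IsTopologicalGroup G]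
    [TotallyDisconnectedSpace G] [LocallyCompactSpace G]
    (α : G →* G) (hα : Continuous α)
    (U : Subgroup G) (hUc : IsCompact (U : Set G)) (hUo : IsOpen (U : Set G)) :
    ∃ N : ℕ,
      (seqU α U N : Set G) * (Subgroup.comap α U : Set G)
        = (Uplus α U : Set G) * (Subgroup.comap α U : Set G) ∧
      TidyAbove α (Uneg α U N) := by
  classical
  set W : Subgroup G := Subgroup.comap α U with hWdef
  have hiter : ∀ n, Continuous (iterHom α n) := continuous_iterHom α hα
  have hUcl : IsClosed (U : Set G) := Subgroup.isClosed_of_isOpen U hUo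
  have hseqc : ∀ n, IsCompact (seqU α U n : Set G) := isCompact_seqU α U hα hUc
  have hseqcl : ∀ n, IsClosed (seqU α U n : Set G) := fun n => (hseqc n).isClosed
  have hUnegcl : ∀ n, IsClosed (Uneg α U n : Set G) := isClosed_Uneg α U hα hUcl
  have hUmincl : IsClosed (Uminus α U : Set G) := isClosed_Uminus α U hα hUcl
  have hWo : IsOpen (W : Set G) := hUo.preimage hα
  -- counting cosets of W in the quotient
  have hfin : (Set.image (QuotientGroup.mk : G → G ⧸ W) (U : Set G)).Finite := by
    have hcover : (U : Set G) ⊆ ⋃ g : G, g • (W : Set G) := fun u _ =>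
      Set.mem_iUnion.mpr ⟨u, Set.mem_smul_set.mpr ⟨1, W.one_mem, mul_one u⟩⟩
    obtain ⟨t, ht⟩ := hUc.elim_finite_subcover (fun g : G => g • (W : Set G))
      (fun g => hWo.smul g) hcover
    have hsub : Set.image (QuotientGroup.mk : G → G ⧸ W) (U : Set G)
        ⊆ ⋃ g ∈ t, {QuotientGroup.mk g} := by
      rintro q ⟨u, hu, rfl⟩
      obtain ⟨g, hg, hu'⟩ := Set.mem_iUnion₂.mp (ht hu)
      obtain ⟨w, hw, rfl⟩ := Set.mem_smul_set.mp hu'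
      refine Set.mem_iUnion₂.mpr ⟨g, hg, ?_⟩
      have : QuotientGroup.mk (g * w) = (QuotientGroup.mk g : G ⧸ W) := by
        rw [QuotientGroup.eq]
        simpa [mul_assoc] using W.inv_mem hw
      simp [this]
    exact (t.finite_toSet.biUnion fun g _ => Set.finite_singleton _).subset hsub
  set M : ℕ → Set (G ⧸ W) := fun n => Set.image QuotientGroup.mk (seqU α U n : Set G)
    with hMdef
  have hMfin : ∀ n, (M n).Finite := fun n =>
    hfin.subset (Set.image_mono (seqU_le α U n))
  have hMmono : ∀ {m n : ℕ}, m ≤ n → M n ⊆ M m := fun h =>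
    Set.image_mono (seqU_anti α U h)
  set f : ℕ → ℕ := fun n => (M n).ncard with hfdef
  obtain ⟨N, hN⟩ : ∃ N, f N = sInf (Set.range f) := Nat.sInf_mem (Set.range_nonempty f)
  have hstab : ∀ n, N ≤ n → M n = M N := by
    intro n hn
    refine Set.eq_of_subset_of_ncard_le (hMmono hn) ?_ (hMfin N)
    have h1 : sInf (Set.range f) ≤ f n := Nat.sInf_le ⟨n, rfl⟩
    calc (M N).ncard = f N := rfl
      _ ≤ f n := by rw [hN]; exact h1
      _ = (M n).ncard := rfl
  -- coset decomposition at each level ≥ N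
  have hbase : ∀ n, N ≤ n → ∀ x ∈ seqU α U n, ∃ u z : G,
      u ∈ seqU α U (n + 1) ∧ z ∈ seqU α U n ∧ z ∈ W ∧ x = u * z := by
    intro n hn x hx
    have hx' : (QuotientGroup.mk x : G ⧸ W) ∈ M (n + 1) := by
      rw [hstab (n + 1) (hn.trans (Nat.le_succ n)), ← hstab n hn]
      exact ⟨x, hx, rfl⟩
    obtain ⟨u, hu, huq⟩ := hx'
    have hzW : u⁻¹ * x ∈ W := QuotientGroup.eq.mp huq
    exact ⟨u, u⁻¹ * x, hu, mul_mem (inv_mem (seqU_succ_le α U n hu)) hx, hzW,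
      (mul_inv_cancel_left u x).symm⟩
  -- key inductive decomposition
  have hB : ∀ m n, N ≤ n → ∀ x ∈ seqU α U n, ∃ u z : G,
      u ∈ seqU α U (n + 1) ∧ z ∈ seqU α U n ∧ z ∈ Uneg α U m ∧ x = u * z := by
    intro m
    induction m with
    | zero =>
      intro n hn x hx
      obtain ⟨u, z, hu, hzn, _, hxe⟩ := hbase n hn x hx
      refine ⟨u, z, hu, hzn, (mem_Uneg α U).mpr fun k hk => ?_, hxe⟩
      obtain rfl := Nat.le_zero.mp hk
      exact seqU_le α U n hzn
    | succ m ih =>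
      intro n hn x hx
      obtain ⟨u, z, hu, hzn, hzW, hxe⟩ := hbase n hn x hx
      have hαz : α z ∈ seqU α U (n + 1) := by
        show α z ∈ U ⊓ Subgroup.map α (seqU α U n)
        exact Subgroup.mem_inf.mpr ⟨Subgroup.mem_comap.mp hzW,
          Subgroup.mem_map.mpr ⟨z, hzn, rfl⟩⟩
      obtain ⟨u₁, z₁, hu₁, hz₁n, hz₁neg, he₁⟩ := ih (n + 1) (hn.trans (Nat.le_succ n)) (α z) hαz
      have hu₁' : u₁ ∈ U ⊓ Subgroup.map α (seqU α U (n + 1)) := hu₁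
      obtain ⟨t, ht, hte⟩ := Subgroup.mem_map.mp (Subgroup.mem_inf.mp hu₁').2
      have hz' : α (t⁻¹ * z) = z₁ := by
        rw [map_mul, map_inv, hte, he₁]
        group
      refine ⟨u * t, t⁻¹ * z, mul_mem hu ht,
        mul_mem (inv_mem (seqU_succ_le α U n ht)) hzn,
        (mem_Uneg α U).mpr fun k hk => ?_, by rw [hxe]; group⟩
      match k, hk with
      | 0, _ =>
        show t⁻¹ * z ∈ U
        exact mul_mem (inv_mem (seqU_le α U (n + 1) ht)) (seqU_le α U n hzn)
      | (j + 1), hk =>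
        rw [iterHom_apply_succ', hz']
        exact (mem_Uneg α U).mp hz₁neg j (Nat.succ_le_succ_iff.mp hk)
  -- compactness: remainder in U₋
  have hC : ∀ n, N ≤ n → ∀ x ∈ seqU α U n, ∃ u z : G,
      u ∈ seqU α U (n + 1) ∧ z ∈ Uminus α U ∧ x = u * z := by
    intro n hn x hx
    set K : ℕ → Set G := fun m =>
      (Uneg α U m : Set G) ∩ (fun z => x * z⁻¹) ⁻¹' (seqU α U (n + 1) : Set G) with hKdef
    have hKsub : ∀ m, K (m + 1) ⊆ K m := fun m z hz =>
      ⟨Uneg_anti α U (Nat.le_succ m) hz.1, hz.2⟩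
    have hKne : ∀ m, (K m).Nonempty := by
      intro m
      obtain ⟨u, z, hu, _, hzneg, hxe⟩ := hB m n hn x hx
      refine ⟨z, hzneg, ?_⟩
      show x * z⁻¹ ∈ seqU α U (n + 1)
      rw [hxe, mul_inv_cancel_right]
      exact hu
    have hKcl : ∀ m, IsClosed (K m) := fun m =>
      (hUnegcl m).inter ((hseqcl (n + 1)).preimage (continuous_const.mul continuous_inv))
    have hK0c : IsCompact (K 0) :=
      IsCompact.of_isClosed_subset hUc (hKcl 0) fun z hz => Uneg_le α U 0 hz.1
    obtain ⟨z, hz⟩ := IsCompact.nonempty_iInter_of_sequence_nonempty_isCompact_isClosed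
      K hKsub hKne hK0c hKcl
    simp only [Set.mem_iInter] at hz
    refine ⟨x * z⁻¹, z, (hz 0).2, ?_, (inv_mul_cancel_right x z).symm⟩
    exact (mem_Uminus α U).mpr fun k => (mem_Uneg α U).mp (hz k).1 k le_rfl
  -- U_N ⊆ U₊ U₋
  have hD : ∀ x ∈ seqU α U N, ∃ w y : G,
      w ∈ Uplus α U ∧ y ∈ Uminus α U ∧ x = w * y := by
    intro x hx
    set T : ℕ → Set G := fun j =>
      (seqU α U (N + j) : Set G) ∩ (fun w => x⁻¹ * w) ⁻¹' (Uminus α U : Set G) with hTdef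
    have hTsub : ∀ j, T (j + 1) ⊆ T j := fun j w hw =>
      ⟨seqU_anti α U (by omega) hw.1, hw.2⟩
    have hTne : ∀ j, (T j).Nonempty := by
      intro j
      induction j with
      | zero =>
        refine ⟨x, hx, ?_⟩
        show x⁻¹ * x ∈ Uminus α U
        rw [inv_mul_cancel]
        exact one_mem _
      | succ j ihj =>
        obtain ⟨w, hw1, hw2⟩ := ihj
        obtain ⟨u, z, hu, hzmin, hwe⟩ := hC (N + j) (Nat.le_add_right N j) w hw1
        refine ⟨u, hu, ?_⟩
        show x⁻¹ * u ∈ Uminus α U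
        have hxu : x⁻¹ * u = (x⁻¹ * w) * z⁻¹ := by rw [hwe]; group
        rw [hxu]
        exact mul_mem hw2 (inv_mem hzmin)
    have hTcl : ∀ j, IsClosed (T j) := fun j =>
      (hseqcl (N + j)).inter (hUmincl.preimage (continuous_const.mul continuous_id))
    have hT0c : IsCompact (T 0) :=
      IsCompact.of_isClosed_subset hUc (hTcl 0) fun w hw => seqU_le α U (N + 0) hw.1
    obtain ⟨w, hw⟩ := IsCompact.nonempty_iInter_of_sequence_nonempty_isCompact_isClosed
      T hTsub hTne hT0c hTcl
    simp only [Set.mem_iInter] at hw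
    refine ⟨w, w⁻¹ * x, (mem_Uplus α U).mpr fun n =>
      seqU_anti α U (Nat.le_add_left n N) (hw n).1, ?_, (mul_inv_cancel_left w x).symm⟩
    have h0 : x⁻¹ * w ∈ Uminus α U := (hw 0).2
    have := inv_mem h0
    simpa [mul_inv_rev] using this
  -- first conjunct
  have hUminusW : Uminus α U ≤ W := Uminus_le_comap α U
  have hconj1 : (seqU α U N : Set G) * (W : Set G) = (Uplus α U : Set G) * (W : Set G) := by
    apply Set.Subset.antisymm
    · intro p hp
      rw [Set.mem_mul] at hp
      obtain ⟨s, hs, h, hh, rfl⟩ := hp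
      obtain ⟨w, y, hwp, hymin, rfl⟩ := hD s hs
      rw [Set.mem_mul]
      exact ⟨w, hwp, y * h, mul_mem (hUminusW hymin) hh, (mul_assoc w y h).symm⟩
    · exact Set.mul_subset_mul_right fun g hg =>
        (mem_Uplus α U).mp hg N
  -- second conjunct : tidiness above of V = U₋ₙ
  set V : Subgroup G := Uneg α U N with hVdef
  have hVc : IsCompact (V : Set G) :=
    IsCompact.of_isClosed_subset hUc (hUnegcl N) (Uneg_le α U N)
  have hseqVc : ∀ n, IsCompact (seqU α V n : Set G) := isCompact_seqU α V hα hVc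
  have hseqVcl : ∀ n, IsClosed (seqU α V n : Set G) := fun n => (hseqVc n).isClosed
  have hVneg : ∀ n, Uneg α V n = Uneg α U (N + n) := by
    intro n
    ext x
    rw [mem_Uneg, mem_Uneg]
    constructor
    · intro h m hm
      rcases le_or_gt m N with hmN | hmN
      · exact (mem_Uneg α U).mp (h 0 (Nat.zero_le n)) m hmN
      · have h1 := (mem_Uneg α U).mp (h (m - N) (by omega)) N le_rfl
        rw [← iterHom_apply_add] at h1
        have h2 : N + (m - N) = m := by omega
        rwa [h2] at h1
    · intro h k hk
      refine (mem_Uneg α U).mpr fun j hj => ?_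
      rw [← iterHom_apply_add]
      exact h (j + k) (by omega)
  have hVminus : Uminus α V = Uminus α U := by
    ext x
    rw [mem_Uminus, mem_Uminus]
    constructor
    · intro h n
      exact Uneg_le α U N (h n)
    · intro h n
      refine (mem_Uneg α U).mpr fun j _ => ?_
      rw [← iterHom_apply_add]
      exact h (j + n)
  have htidy : TidyAbove α V := by
    unfold TidyAbove
    apply Set.Subset.antisymm
    · intro v hv
      have hvV : v ∈ V := hv
      have hxN : iterHom α N v ∈ seqU α U N := by
        rw [← map_iterHom_Uneg α U N]
        exact Subgroup.mem_map.mpr ⟨v, hvV, rfl⟩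
      obtain ⟨w, y, hw, hy, hxy⟩ := hD _ hxN
      have hAne : ∀ n, ∃ z, z ∈ seqU α V n ∧ iterHom α N z = w := by
        intro n
        have hw' : w ∈ seqU α U (N + n) := (mem_Uplus α U).mp hw (N + n)
        rw [← map_iterHom_Uneg α U (N + n)] at hw'
        obtain ⟨ζ, hζ, hζe⟩ := Subgroup.mem_map.mp hw'
        refine ⟨iterHom α n ζ, ?_, ?_⟩
        · rw [← map_iterHom_Uneg α V n]
          exact Subgroup.mem_map.mpr ⟨ζ, by rw [hVneg n]; exact hζ, rfl⟩
        · rw [← iterHom_apply_add]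
          exact hζe
      set A : ℕ → Set G := fun n =>
        (seqU α V n : Set G) ∩ iterHom α N ⁻¹' {w} with hAdef
      have hAsub : ∀ n, A (n + 1) ⊆ A n := fun n z hz =>
        ⟨seqU_succ_le α V n hz.1, hz.2⟩
      have hAne' : ∀ n, (A n).Nonempty := by
        intro n
        obtain ⟨z, h1, h2⟩ := hAne n
        exact ⟨z, h1, h2⟩
      have hAcl : ∀ n, IsClosed (A n) := fun n =>
        (hseqVcl n).inter (isClosed_singleton.preimage (hiter N))
      have hA0c : IsCompact (A 0) :=
        IsCompact.of_isClosed_subset hVc (hAcl 0) fun z hz => hz.1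
      obtain ⟨a, ha⟩ := IsCompact.nonempty_iInter_of_sequence_nonempty_isCompact_isClosed
        A hAsub hAne' hA0c hAcl
      simp only [Set.mem_iInter] at ha
      have haP : a ∈ Uplus α V := (mem_Uplus α V).mpr fun n => (ha n).1
      have haw : iterHom α N a = w := (ha 0).2
      have haV : a ∈ V := (mem_Uplus α V).mp haP 0
      refine Set.mem_mul.mpr ⟨a, haP, a⁻¹ * v, ?_, mul_inv_cancel_left a v⟩
      show a⁻¹ * v ∈ Uminus α V
      rw [hVminus, mem_Uminus]
      intro k
      rcases le_or_gt k N with hk | hk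
      · have ha' : iterHom α k a ∈ U := (mem_Uneg α U).mp haV k hk
        have hv' : iterHom α k v ∈ U := (mem_Uneg α U).mp hvV k hk
        rw [map_mul, map_inv]
        exact mul_mem (inv_mem ha') hv'
      · have hNb : iterHom α N (a⁻¹ * v) = y := by
          rw [map_mul, map_inv, haw, hxy]
          group
        have hke : k = (k - N) + N := by omega
        rw [hke, iterHom_apply_add, hNb]
        exact (mem_Uminus α U).mp hy (k - N)
    · intro p hp
      rw [Set.mem_mul] at hp
      obtain ⟨a, ha, b, hb, rfl⟩ := hp
      have haV : a ∈ V := (mem_Uplus α V).mp ha 0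
      have hbV : b ∈ V := (mem_Uminus α V).mp hb 0
      exact mul_mem haV hbV
  exact ⟨N, hconj1, htidy⟩
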